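/- arXiv:2503.23110 — 2 statements merged into one kernel-verified Lean document; each statement's English description precedes it below -/
import Mathlib

section
/- Let N_E be the number of edges in G(n,m,p) with n, m ≥ 3 and p ∈ (0,1). Then Var[N_E] = C(n,2)·p̂(1−p̂) + 6·C(n,3)·[ (1 − 2p² + p³)^m − (1−p̂)² ], where p̂ = 1 − (1−p²)^m and C(n,k) denotes the binomial coefficient. -/
open Finset MeasureTheory ProbabilityTheory Filter Topology

namespace RIG

noncomputable section

/-- `{0,1}^m`, the space of attribute vectors. -/
abbrev V (m : ℕ) : Type := Fin m → Bool

/-- The `Bernoulli(p)^{⊗ m}` weight of `x ∈ {0,1}^m`, i.e. `μ_{m,p}({x})`. -/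
def bw (m : ℕ) (p : ℝ) (x : V m) : ℝ := ∏ i : Fin m, if x i then p else 1 - p

/-- The `μ_{m,p}^{⊗ k}` weight of a `k`-tuple of attribute vectors. -/
def bwk (m k : ℕ) (p : ℝ) (x : Fin k → V m) : ℝ := ∏ j : Fin k, bw m p (x j)

/-- Integral with respect to `μ_{m,p}^{⊗ k}`. -/
def intk (m k : ℕ) (p : ℝ) (F : (Fin k → V m) → ℝ) : ℝ :=
  ∑ x : Fin k → V m, bwk m k p x * F x

/-- Squared `L²(μ_{m,p}^{⊗ k})` norm. -/
def normSq (m k : ℕ) (p : ℝ) (F : (Fin k → V m) → ℝ) : ℝ :=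
  intk m k p fun x => F x ^ 2

/-- The underlying probability space of `G(n,m,p)`: each of the `n` vertices
chooses an attribute vector in `{0,1}^m`. -/
abbrev Om (n m : ℕ) : Type := Fin n → V m

/-- Probability weight of a sample point `ω`. -/
def Wt (n m : ℕ) (p : ℝ) (ω : Om n m) : ℝ := ∏ k : Fin n, bw m p (ω k)

/-- Expectation of a random variable on `Om n m`. -/
def EE (n m : ℕ) (p : ℝ) (F : Om n m → ℝ) : ℝ := ∑ ω : Om n m, Wt n m p ω * F ω

/-- Variance of a random variable on `Om n m`. -/
def VarE (n m : ℕ) (p : ℝ) (F : Om n m → ℝ) : ℝ :=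
  EE n m p fun ω => (F ω - EE n m p F) ^ 2

/-- Probability of an event. -/
def Pr (n m : ℕ) (p : ℝ) (s : Set (Om n m)) : ℝ :=
  ∑ ω : Om n m, Set.indicator s (Wt n m p) ω

/-- Standardisation of a random variable. -/
def std (n m : ℕ) (p : ℝ) (F : Om n m → ℝ) (ω : Om n m) : ℝ :=
  (F ω - EE n m p F) / Real.sqrt (VarE n m p F)

/-- The standard normal CDF. -/
def Phi (t : ℝ) : ℝ := (gaussianReal 0 1 (Set.Iic t)).toReal

/-- Kolmogorov distance between (the law of) `F` and the standard normal. -/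
def dK (n m : ℕ) (p : ℝ) (F : Om n m → ℝ) : ℝ :=
  ⨆ t : ℝ, |Pr n m p {ω | F ω ≤ t} - Phi t|

/-- Wasserstein distance between (the law of) `F` and the standard normal. -/
def dW (n m : ℕ) (p : ℝ) (F : Om n m → ℝ) : ℝ :=
  ⨆ h : {h : ℝ → ℝ // LipschitzWith 1 h},
    |EE n m p (fun ω => h.1 (F ω)) - ∫ x, h.1 x ∂(gaussianReal 0 1)|

/-- `d_{K/W}`: the maximum of the Kolmogorov and Wasserstein distances. -/
def dKW (n m : ℕ) (p : ℝ) (F : Om n m → ℝ) : ℝ := max (dK n m p F) (dW n m p F)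

/-- The edge probability `p̂ = 1 - (1-p²)^m`. -/
def phat (m : ℕ) (p : ℝ) : ℝ := 1 - (1 - p ^ 2) ^ m

/-- The number of edges of `G(n,m,p)`: two vertices are adjacent iff they share
a chosen attribute. -/
def NE (n m : ℕ) (ω : Om n m) : ℝ :=
  ∑ k : Fin n, ∑ l : Fin n,
    if k < l ∧ ∃ a : Fin m, ω k a ∧ ω l a then 1 else 0


/-- Assemble `k` variables from three blocks: the first `a` from `w`, the next
`b - a` from `x` and the last `k - b` from `y`. -/
def asm3 {m : ℕ} (a b k : ℕ) (w : Fin a → V m) (x : Fin (b - a) → V m)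
    (y : Fin (k - b) → V m) : Fin k → V m := fun i =>
  if h1 : (i : ℕ) < a then w ⟨i, h1⟩
  else if h2 : (i : ℕ) < b then x ⟨(i : ℕ) - a, by omega⟩
  else y ⟨(i : ℕ) - b, by have := i.isLt; omega⟩

/-- The contraction `f *_b^a g` of `f : (V m)^k → ℝ` and `g : (V m)^l → ℝ`:
the first `a` variables are shared and integrated out, the next `b - a`
variables are shared, and the remaining variable blocks are separate. -/
def contract (m : ℕ) (p : ℝ) (k l a b : ℕ)
    (f : (Fin k → V m) → ℝ) (g : (Fin l → V m) → ℝ)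
    (x : Fin (b - a) → V m) (y : Fin (k - b) → V m) (z : Fin (l - b) → V m) : ℝ :=
  ∑ w : Fin a → V m, bwk m a p w * (f (asm3 a b k w x y) * g (asm3 a b l w x z))

/-- Squared `L²` norm `‖f *_b^a g‖₂²` of a contraction. -/
def contractNormSq (m : ℕ) (p : ℝ) (k l a b : ℕ)
    (f : (Fin k → V m) → ℝ) (g : (Fin l → V m) → ℝ) : ℝ :=
  ∑ x : Fin (b - a) → V m, ∑ y : Fin (k - b) → V m, ∑ z : Fin (l - b) → V m,
    bwk m (b - a) p x * bwk m (k - b) p y * bwk m (l - b) p z *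
      contract m p k l a b f g x y z ^ 2

/-- `L²` norm `‖f *_b^a g‖₂` of a contraction. -/
def contractNorm (m : ℕ) (p : ℝ) (k l a b : ℕ)
    (f : (Fin k → V m) → ℝ) (g : (Fin l → V m) → ℝ) : ℝ :=
  Real.sqrt (contractNormSq m p k l a b f g)

/-- `h_j`: integrating out the last `r - j` variables of `h`. -/
def marg (m r j : ℕ) (p : ℝ) (h : (Fin r → V m) → ℝ) (x : Fin j → V m) : ℝ :=
  ∑ y : Fin (r - j) → V m, bwk m (r - j) p y *
    h fun i =>
      if hi : (i : ℕ) < j then x ⟨i, hi⟩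
      else y ⟨(i : ℕ) - j, by have := i.isLt; omega⟩

/-- The centralization `f̄ = f - ∫ f dμ^{⊗k}`. -/
def center (m k : ℕ) (p : ℝ) (f : (Fin k → V m) → ℝ) : (Fin k → V m) → ℝ :=
  fun x => f x - intk m k p f

/-- `Φ_{x_i} f`: centralization of `f` in the `i`-th coordinate. -/
def phiC (m k : ℕ) (p : ℝ) (i : Fin k) (f : (Fin k → V m) → ℝ) :
    (Fin k → V m) → ℝ :=
  fun x => f x - ∑ t : V m, bw m p t * f (Function.update x i t)

/-- The coordinate-wise centralization `f̈ = Φ_{x₁} ⋯ Φ_{x_k} f`. -/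
def ddot (m k : ℕ) (p : ℝ) (f : (Fin k → V m) → ℝ) : (Fin k → V m) → ℝ :=
  (List.finRange k).foldr (phiC m k p) f

/-- The U-statistic `X = ∑_{1 ≤ k₁ < … < k_r ≤ n} h(A^{(k₁)}, …, A^{(k_r)})`. -/
def Ustat (n m r : ℕ) (h : (Fin r → V m) → ℝ) (ω : Om n m) : ℝ :=
  ∑ s : {s : Finset (Fin n) // s.card = r}, h fun i => ω (s.1.orderEmbOfFin s.2 i)


/-- The attribute `a` *builds* the set `C ⊆ V(H)` (where `S = V(H)`): all
vertices of `C` chose `a` and no other vertex of `S` chose `a`. -/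
def Builds (n m : ℕ) (ω : Om n m) (a : Fin m) (S C : Finset (Fin n)) : Prop :=
  (∀ v ∈ C, ω v a = true) ∧ ∀ v ∈ S, v ∉ C → ω v a = false

/-- `𝒫(H)`: the family of subsets of `S = V(H)` containing both endpoints of at
least one edge of `H` (edges given by the family `E` of `2`-element sets). -/
def Pcal (n : ℕ) (S : Finset (Fin n)) (E : Finset (Finset (Fin n))) :
    Finset (Finset (Fin n)) :=
  S.powerset.filter fun C => ∃ e ∈ E, e ⊆ C

/-- `𝒞` is a clique cover of the graph `H = (S, E)`. -/
def IsCliqueCover (n : ℕ) (S : Finset (Fin n)) (E : Finset (Finset (Fin n)))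
    (𝒞 : Finset (Finset (Fin n))) : Prop :=
  𝒞 ⊆ Pcal n S E ∧ ∀ e ∈ E, ∃ C ∈ 𝒞, e ⊆ C

/-- `H = (S, E)` is *given by* the clique cover `𝒞` in `G(n,m,p)`: every
`C ∈ 𝒞` is built by some attribute and no member of `𝒫(H) \ 𝒞` is built by
any attribute. -/
def GivenBy (n m : ℕ) (ω : Om n m) (S : Finset (Fin n))
    (E : Finset (Finset (Fin n))) (𝒞 : Finset (Finset (Fin n))) : Prop :=
  (∀ C ∈ 𝒞, ∃ a : Fin m, Builds n m ω a S C) ∧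
    ∀ C ∈ Pcal n S E, C ∉ 𝒞 → ∀ a : Fin m, ¬Builds n m ω a S C

/-- `π(H, 𝒞)`: probability that `H` is given by precisely the clique cover `𝒞`. -/
def piCC (n m : ℕ) (p : ℝ) (S : Finset (Fin n)) (E : Finset (Finset (Fin n)))
    (𝒞 : Finset (Finset (Fin n))) : ℝ :=
  Pr n m p {ω | GivenBy n m ω S E 𝒞}

/-- `π(H, 𝒞₊, 𝒞₋)`: probability that `H` is given by some clique cover `𝒞`
with `𝒞₊ ⊆ 𝒞 ⊆ 𝒫(H) \ 𝒞₋`. -/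
def piPM (n m : ℕ) (p : ℝ) (S : Finset (Fin n)) (E : Finset (Finset (Fin n)))
    (Cp Cm : Finset (Finset (Fin n))) : ℝ :=
  Pr n m p {ω | ∃ 𝒞 : Finset (Finset (Fin n)),
    Cp ⊆ 𝒞 ∧ 𝒞 ⊆ Pcal n S E \ Cm ∧ IsCliqueCover n S E 𝒞 ∧ GivenBy n m ω S E 𝒞}

/-- `p_C = p^{|C|} (1-p)^{|V(H)| - |C|}`. -/
def pC (n : ℕ) (p : ℝ) (S C : Finset (Fin n)) : ℝ :=
  p ^ C.card * (1 - p) ^ (S.card - C.card)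

open Classical in
/-- The family `𝒦(F,G)` of all clique covers `𝒞` of `F ∪ G` with
`E(G) ⊆ 𝒞 ⊆ 𝒫(F ∪ G) \ E(F)`. -/
def Kfam (n : ℕ) (S : Finset (Fin n)) (EF EG : Finset (Finset (Fin n))) :
    Finset (Finset (Finset (Fin n))) :=
  (Pcal n S (EF ∪ EG)).powerset.filter fun 𝒞 =>
    IsCliqueCover n S (EF ∪ EG) 𝒞 ∧ EG ⊆ 𝒞 ∧ Disjoint 𝒞 EF


/-- The edge kernel `g(x,y) = 1` iff `x` and `y` share a common attribute. -/
def gfun (m : ℕ) (x y : V m) : ℝ := if ∃ i : Fin m, x i ∧ y i then 1 else 0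

/-- `g₁(x) = ∫ g(x,y) dμ_{m,p}(y)`. -/
def g1 (m : ℕ) (p : ℝ) (x : V m) : ℝ := ∑ y : V m, bw m p y * gfun m x y

/-- `ḡ₁ = g₁ - p̂`. -/
def gbar1 (m : ℕ) (p : ℝ) (x : V m) : ℝ := g1 m p x - phat m p

/-- `ḡ₂(x,y) = g(x,y) - p̂`. -/
def gbar2 (m : ℕ) (p : ℝ) (x y : V m) : ℝ := gfun m x y - phat m p

/-- `ρ = 1 - g`. -/
def rho (m : ℕ) (x y : V m) : ℝ := 1 - gfun m x y

/-- `ρ₁(x) = ∫ ρ(x,y) dμ_{m,p}(y)`. -/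
def rho1 (m : ℕ) (p : ℝ) (x : V m) : ℝ := ∑ y : V m, bw m p y * rho m x y

/-- The probability that all the (ordered-pair) edges in `Ed` are present in
`G(n,m,p)`, i.e. `P(H ⊆ G(n,m,p))` for the graph `H` with edge set `Ed`. -/
def piSub (n m : ℕ) (p : ℝ) (Ed : Finset (Fin n × Fin n)) : ℝ :=
  Pr n m p {ω | ∀ e ∈ Ed, ∃ a : Fin m, ω e.1 a ∧ ω e.2 a}

/-- The set of vertices used by the edge set `Ed`. -/
def supp (n : ℕ) (Ed : Finset (Fin n × Fin n)) : Finset (Fin n) :=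
  Ed.image Prod.fst ∪ Ed.image Prod.snd

/-- Edge pattern of `G₁ ≅ K_{1,4}` on `8` labels: edge `k` joins the centre `0`
with the leaf `k+1`. -/
def edg1 (k : Fin 4) : Fin 8 × Fin 8 := (0, ⟨(k : ℕ) + 1, by omega⟩)

/-- Edge pattern of `G₂ ≅ C₄` on `8` labels: edge `k = (a,b)` joins `v_a = a`
with `u_b = 2 + b`, where `a = k / 2` and `b = k % 2`. -/
def edg2 (k : Fin 4) : Fin 8 × Fin 8 :=
  (⟨(k : ℕ) / 2, by omega⟩, ⟨2 + (k : ℕ) % 2, by omega⟩)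

/-- Edge pattern of `G₃ ≅ P₅` (path `z₁–x₁–y–x₂–z₂` with `y = 0`, `x₁ = 1`,
`x₂ = 2`, `z₁ = 3`, `z₂ = 4`): edges `e₁₁ = {x₁,y}`, `e₁₂ = {x₁,z₁}`,
`e₂₁ = {x₂,y}`, `e₂₂ = {x₂,z₂}`. -/
def edg3 : Fin 4 → Fin 8 × Fin 8 := ![(1, 0), (1, 3), (2, 0), (2, 4)]

/-- The edges of `G_{i,I}` inside `Fin n`, via the injection `v`. -/
def bedg (n : ℕ) (v : Fin 8 → Fin n) (edg : Fin 4 → Fin 8 × Fin 8)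
    (I : Finset (Fin 4)) : Finset (Fin n × Fin n) :=
  I.image fun k => (v (edg k).1, v (edg k).2)

/-- The edges of `H_{i,I}`: the edges of `G_{i,I}` together with the isolated
edges `iso I k`, `k ∉ I`. -/
def Hset (n : ℕ) (v : Fin 8 → Fin n) (edg : Fin 4 → Fin 8 × Fin 8)
    (iso : Finset (Fin 4) → Fin 4 → Fin n × Fin n) (I : Finset (Fin 4)) :
    Finset (Fin n × Fin n) :=
  bedg n v edg I ∪ Iᶜ.image (iso I)

/-- For every `I`, the isolated edges `iso I k`, `k ∉ I`, are proper edges,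
pairwise vertex-disjoint, vertex-disjoint from `G_{i,I}`, and the resulting
graph `H_{i,I}` lives on (at most) `8` vertices. -/
def GoodIso (n : ℕ) (v : Fin 8 → Fin n) (edg : Fin 4 → Fin 8 × Fin 8)
    (iso : Finset (Fin 4) → Fin 4 → Fin n × Fin n) : Prop :=
  ∀ I : Finset (Fin 4),
    (∀ k ∉ I, (iso I k).1 ≠ (iso I k).2 ∧
      (iso I k).1 ∉ supp n (bedg n v edg I) ∧
      (iso I k).2 ∉ supp n (bedg n v edg I)) ∧
    (∀ k ∉ I, ∀ k' ∉ I, k ≠ k' →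
      Disjoint ({(iso I k).1, (iso I k).2} : Finset (Fin n))
        {(iso I k').1, (iso I k').2}) ∧
    (supp n (Hset n v edg iso I)).card ≤ 8



/-- Bernoulli weight of a bit. -/
def br (p : ℝ) (b : Bool) : ℝ := if b then p else 1 - p

/-- 0/1 value of a bit. -/
def ib (b : Bool) : ℝ := if b then 1 else 0

lemma sum_br (p : ℝ) : ∑ b : Bool, br p b = 1 := by
  rw [Fintype.sum_bool]; simp [br]

lemma sum_prod_pi {ι κ : Type*} [Fintype ι] [DecidableEq ι] [Fintype κ] (f : ι → κ → ℝ) :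
    ∑ g : ι → κ, ∏ i, f i (g i) = ∏ i, ∑ j, f i j := (Fintype.prod_sum f).symm

lemma sum_colW (n : ℕ) (p : ℝ) : ∑ c : Fin n → Bool, (∏ k, br p (c k)) = 1 := by
  rw [sum_prod_pi (f := fun _ b => br p b)]
  have h : ∑ b : Bool, br p b = 1 := sum_br p
  rw [h, Finset.prod_const_one]

lemma sum_bw (m : ℕ) (p : ℝ) : ∑ x : V m, bw m p x = 1 := by
  have h : ∀ x : V m, bw m p x = ∏ a, br p (x a) := fun _ => rfl
  simp_rw [h]
  exact sum_colW m p

lemma sum_Wt (n m : ℕ) (p : ℝ) : ∑ ω : Om n m, Wt n m p ω = 1 := by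
  unfold Wt
  rw [sum_prod_pi (f := fun _ x => bw m p x)]
  simp [sum_bw]

lemma colE_monomial (n : ℕ) (p : ℝ) (S : Finset (Fin n)) :
    ∑ c : Fin n → Bool, (∏ k, br p (c k)) * (∏ k ∈ S, ib (c k)) = p ^ S.card := by
  have h1 : ∀ c : Fin n → Bool, (∏ k, br p (c k)) * (∏ k ∈ S, ib (c k))
      = ∏ k, (br p (c k) * (if k ∈ S then ib (c k) else 1)) := by
    intro c
    rw [Finset.prod_mul_distrib]
    congr 1
    rw [Finset.prod_ite_mem]
    simp
  simp_rw [h1]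
  rw [sum_prod_pi (f := fun k b => br p b * (if k ∈ S then ib b else 1))]
  have h2 : ∀ k : Fin n, (∑ b : Bool, br p b * (if k ∈ S then ib b else 1))
      = if k ∈ S then p else 1 := by
    intro k
    rw [Fintype.sum_bool]
    by_cases h : k ∈ S <;> simp [br, ib, h]
  simp_rw [h2]
  rw [Finset.prod_ite_mem, Finset.univ_inter, Finset.prod_const]

lemma EE_col (n m : ℕ) (p : ℝ) (H : (Fin n → Bool) → ℝ) :
    EE n m p (fun ω => ∏ a : Fin m, H (fun k => ω k a)) =
      (∑ c : Fin n → Bool, (∏ k, br p (c k)) * H c) ^ m := by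
  unfold EE Wt bw
  have h1 : ∀ ω : Om n m,
      (∏ k, ∏ i, if ω k i then p else 1 - p) * (∏ a, H (fun k => ω k a))
        = ∏ a, ((∏ k, br p (ω k a)) * H (fun k => ω k a)) := by
    intro ω
    rw [Finset.prod_comm, ← Finset.prod_mul_distrib]
    rfl
  simp_rw [h1]
  have h2 : ∑ ω : Om n m, ∏ a, ((∏ k, br p (ω k a)) * H (fun k => ω k a))
      = ∑ τ : Fin m → Fin n → Bool, ∏ a, ((∏ k, br p (τ a k)) * H (τ a)) := by
    apply Fintype.sum_equiv
      (Equiv.mk (α := Fin m → Fin n → Bool) (β := Om n m)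
        Function.swap Function.swap (fun _ => rfl) (fun _ => rfl)).symm
    intro ω
    rfl
  rw [h2, sum_prod_pi (f := fun _ c => (∏ k, br p (c k)) * H c)]
  rw [Finset.prod_const, Finset.card_univ, Fintype.card_fin]



lemma EE_const (n m : ℕ) (p : ℝ) (c : ℝ) : EE n m p (fun _ => c) = c := by
  unfold EE
  rw [← Finset.sum_mul, sum_Wt, one_mul]

lemma EE_sub (n m : ℕ) (p : ℝ) (F G : Om n m → ℝ) :
    EE n m p (fun ω => F ω - G ω) = EE n m p F - EE n m p G := by
  unfold EE
  rw [← Finset.sum_sub_distrib]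
  exact Finset.sum_congr rfl fun _ _ => by ring

lemma EE_add (n m : ℕ) (p : ℝ) (F G : Om n m → ℝ) :
    EE n m p (fun ω => F ω + G ω) = EE n m p F + EE n m p G := by
  unfold EE
  rw [← Finset.sum_add_distrib]
  exact Finset.sum_congr rfl fun _ _ => by ring

lemma EE_smul (n m : ℕ) (p : ℝ) (c : ℝ) (F : Om n m → ℝ) :
    EE n m p (fun ω => c * F ω) = c * EE n m p F := by
  unfold EE
  rw [Finset.mul_sum]
  exact Finset.sum_congr rfl fun _ _ => by ring

lemma EE_sum (n m : ℕ) (p : ℝ) {ι : Type*} (s : Finset ι) (F : ι → Om n m → ℝ) :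
    EE n m p (fun ω => ∑ i ∈ s, F i ω) = ∑ i ∈ s, EE n m p (F i) := by
  unfold EE
  simp_rw [Finset.mul_sum]
  rw [Finset.sum_comm]

/-- The complement-of-edge indicator `Y_{kl}`. -/
def Yf {n : ℕ} (m : ℕ) (k l : Fin n) (ω : Om n m) : ℝ :=
  ∏ a : Fin m, (1 - ib (ω k a) * ib (ω l a))

lemma ib_mul_ib (x y : Bool) : ib x * ib y = if x ∧ y then 1 else 0 := by
  cases x <;> cases y <;> simp [ib]

lemma Yf_eq {n : ℕ} (m : ℕ) (k l : Fin n) (ω : Om n m) :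
    Yf m k l ω = if ∃ a : Fin m, ω k a ∧ ω l a then 0 else 1 := by
  unfold Yf
  by_cases h : ∃ a : Fin m, ω k a ∧ ω l a
  · rw [if_pos h]
    obtain ⟨a, h1, h2⟩ := h
    refine Finset.prod_eq_zero (Finset.mem_univ a) ?_
    simp [ib, h1, h2]
  · rw [if_neg h]
    refine Finset.prod_eq_one fun a _ => ?_
    have ha : ¬(ω k a = true ∧ ω l a = true) := fun hh => h ⟨a, hh.1, hh.2⟩
    rw [ib_mul_ib, if_neg ha, sub_zero]

lemma NE_eq (n m : ℕ) (ω : Om n m) :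
    NE n m ω = (∑ k : Fin n, ∑ l : Fin n, if k < l then (1:ℝ) else 0)
      - ∑ k : Fin n, ∑ l : Fin n, (if k < l then Yf m k l ω else 0) := by
  unfold NE
  rw [← Finset.sum_sub_distrib]
  refine Finset.sum_congr rfl fun k _ => ?_
  rw [← Finset.sum_sub_distrib]
  refine Finset.sum_congr rfl fun l _ => ?_
  by_cases hkl : k < l
  · rw [Yf_eq]
    by_cases hex : ∃ a : Fin m, ω k a ∧ ω l a <;> simp [hkl, hex]
  · simp [hkl]

lemma prod01 {n : ℕ} (S T : Finset (Fin n)) (f : Fin n → ℝ)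
    (hf : ∀ x, f x = 0 ∨ f x = 1) :
    (∏ x ∈ S, f x) * ∏ x ∈ T, f x = ∏ x ∈ S ∪ T, f x := by
  by_cases h : ∃ x ∈ S ∪ T, f x = 0
  · obtain ⟨x, hx, hfx⟩ := h
    rw [Finset.prod_eq_zero hx hfx]
    rcases Finset.mem_union.1 hx with hxS | hxT
    · rw [Finset.prod_eq_zero hxS hfx, zero_mul]
    · rw [Finset.prod_eq_zero hxT hfx, mul_zero]
  · push_neg at h
    have h1 : ∀ x ∈ S ∪ T, f x = 1 := fun x hx => (hf x).resolve_left (h x hx)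
    rw [Finset.prod_eq_one h1,
      Finset.prod_eq_one (fun x hx => h1 x (Finset.mem_union_left _ hx)),
      Finset.prod_eq_one (fun x hx => h1 x (Finset.mem_union_right _ hx)), one_mul]

lemma EE_Yf (n m : ℕ) (p : ℝ) (k l : Fin n) (hkl : k ≠ l) :
    EE n m p (Yf m k l) = (1 - p ^ 2) ^ m := by
  have h0 : Yf m k l = fun ω => ∏ a : Fin m,
      (fun c : Fin n → Bool => 1 - ib (c k) * ib (c l)) (fun k' => ω k' a) := rfl
  rw [h0, EE_col n m p (fun c => 1 - ib (c k) * ib (c l))]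
  congr 1
  have h1 : ∀ c : Fin n → Bool, (∏ x, br p (c x)) * (1 - ib (c k) * ib (c l))
      = (∏ x, br p (c x)) - (∏ x, br p (c x)) * ∏ x ∈ ({k, l} : Finset (Fin n)), ib (c x) := by
    intro c
    rw [Finset.prod_pair hkl]
    ring
  simp_rw [h1]
  rw [Finset.sum_sub_distrib, sum_colW, colE_monomial, Finset.card_pair hkl]

lemma EE_YfYf (n m : ℕ) (p : ℝ) (k l k' l' : Fin n) (hkl : k ≠ l) (hk'l' : k' ≠ l') :
    EE n m p (fun ω => Yf m k l ω * Yf m k' l' ω) =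
      (1 - 2 * p ^ 2 + p ^ (({k, l} ∪ {k', l'} : Finset (Fin n)).card)) ^ m := by
  have h0 : (fun ω : Om n m => Yf m k l ω * Yf m k' l' ω) = fun ω => ∏ a : Fin m,
      (fun c : Fin n → Bool => (1 - ib (c k) * ib (c l)) * (1 - ib (c k') * ib (c l')))
        (fun x => ω x a) := by
    funext ω
    exact (Finset.prod_mul_distrib).symm
  rw [h0, EE_col n m p
    (fun c => (1 - ib (c k) * ib (c l)) * (1 - ib (c k') * ib (c l')))]
  congr 1
  have h1 : ∀ c : Fin n → Bool,
      (∏ x, br p (c x)) * ((1 - ib (c k) * ib (c l)) * (1 - ib (c k') * ib (c l')))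
      = (∏ x, br p (c x))
        - (∏ x, br p (c x)) * ∏ x ∈ ({k, l} : Finset (Fin n)), ib (c x)
        - (∏ x, br p (c x)) * ∏ x ∈ ({k', l'} : Finset (Fin n)), ib (c x)
        + (∏ x, br p (c x)) * ∏ x ∈ ({k, l} ∪ {k', l'} : Finset (Fin n)), ib (c x) := by
    intro c
    rw [← prod01 _ _ _ (fun x => by by_cases h : c x <;> simp [ib, h]),
      Finset.prod_pair hkl, Finset.prod_pair hk'l']
    ring
  simp_rw [h1]
  rw [Finset.sum_add_distrib, Finset.sum_sub_distrib, Finset.sum_sub_distrib,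
    sum_colW, colE_monomial, colE_monomial, colE_monomial,
    Finset.card_pair hkl, Finset.card_pair hk'l']
  ring


lemma card3 {n : ℕ} (a b c : Fin n) (hab : a ≠ b) (hac : a ≠ c) (hbc : b ≠ c) :
    ({a, b, c} : Finset (Fin n)).card = 3 := by
  rw [Finset.card_insert_of_notMem (by simp [hab, hac]), Finset.card_pair hbc]

lemma card4 {n : ℕ} (a b c d : Fin n) (hab : a ≠ b) (hac : a ≠ c) (had : a ≠ d)
    (hbc : b ≠ c) (hbd : b ≠ d) (hcd : c ≠ d) :
    ({a, b, c, d} : Finset (Fin n)).card = 4 := by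
  rw [Finset.card_insert_of_notMem (by simp [hab, hac, had]), card3 b c d hbc hbd hcd]

lemma cov_split (n m : ℕ) (p : ℝ) (k l k' l' : Fin n) :
    (if k < l ∧ k' < l' then
        (1 - 2*p^2 + p ^ (({k,l} ∪ {k',l'} : Finset (Fin n)).card)) ^ m - ((1-p^2)^m)^2
      else 0)
    = ((1-p^2)^m - ((1-p^2)^m)^2) * (if k < l ∧ k' < l' ∧ k = k' ∧ l = l' then 1 else 0)
      + ((1-2*p^2+p^3)^m - ((1-p^2)^m)^2) *
        ((if k < l ∧ k' < l' ∧ k = k' then 1 else 0)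
          + (if k < l ∧ k' < l' ∧ k = l' then 1 else 0)
          + (if k < l ∧ k' < l' ∧ l = k' then 1 else 0)
          + (if k < l ∧ k' < l' ∧ l = l' then 1 else 0)
          - 2 * (if k < l ∧ k' < l' ∧ k = k' ∧ l = l' then 1 else 0)) := by
  by_cases hkl : k < l
  case neg =>
    rw [if_neg (fun h => hkl h.1), if_neg (fun h => hkl h.1), if_neg (fun h => hkl h.1),
      if_neg (fun h => hkl h.1), if_neg (fun h => hkl h.1), if_neg (fun h => hkl h.1)]
    ring
  by_cases hk'l' : k' < l'
  case neg =>
    rw [if_neg (fun h => hk'l' h.2), if_neg (fun h => hk'l' h.2.1), if_neg (fun h => hk'l' h.2.1),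
      if_neg (fun h => hk'l' h.2.1), if_neg (fun h => hk'l' h.2.1), if_neg (fun h => hk'l' h.2.1)]
    ring
  by_cases h1 : k = k' <;> by_cases h2 : l = l'
  · -- pairs equal
    subst h1; subst h2
    have e2 : ¬ k = l := ne_of_lt hkl
    have e3 : ¬ l = k := (ne_of_lt hkl).symm
    rw [Finset.union_self, Finset.card_pair (ne_of_lt hkl)]
    have hpow : (1 - 2*p^2 + p^2 : ℝ) = 1 - p^2 := by ring
    rw [hpow, if_pos (show k < l ∧ k < l from ⟨hkl, hk'l'⟩),
      if_pos (show k < l ∧ k < l ∧ k = k ∧ l = l from ⟨hkl, hk'l', rfl, rfl⟩),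
      if_pos (show k < l ∧ k < l ∧ k = k from ⟨hkl, hk'l', rfl⟩),
      if_neg (show ¬(k < l ∧ k < l ∧ k = l) from fun h => e2 h.2.2),
      if_neg (show ¬(k < l ∧ k < l ∧ l = k) from fun h => e3 h.2.2),
      if_pos (show k < l ∧ k < l ∧ l = l from ⟨hkl, hk'l', rfl⟩)]
    ring
  · -- k = k' only
    subst h1
    have h3 : ¬ k = l' := fun hh => (ne_of_lt hk'l') hh
    have h4 : ¬ l = k := fun hh => (ne_of_lt hkl) hh.symm
    have hu : ({k,l} ∪ {k,l'} : Finset (Fin n)) = {k,l,l'} := by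
      ext x; simp only [Finset.mem_union, Finset.mem_insert, Finset.mem_singleton]; tauto
    rw [hu, card3 k l l' (ne_of_lt hkl) h3 h2,
      if_pos (show k < l ∧ k < l' from ⟨hkl, hk'l'⟩),
      if_neg (show ¬(k < l ∧ k < l' ∧ k = k ∧ l = l') from fun h => h2 h.2.2.2),
      if_pos (show k < l ∧ k < l' ∧ k = k from ⟨hkl, hk'l', rfl⟩),
      if_neg (show ¬(k < l ∧ k < l' ∧ k = l') from fun h => h3 h.2.2),
      if_neg (show ¬(k < l ∧ k < l' ∧ l = k) from fun h => h4 h.2.2)]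
    rw [if_neg (show ¬(k < l ∧ k < l' ∧ l = l') from fun h => h2 h.2.2)]
    ring
  · -- l = l' only
    subst h2
    have h3 : ¬ k = l := ne_of_lt hkl
    have h4 : ¬ l = k' := fun hh => (ne_of_lt hk'l') hh.symm
    have hu : ({k,l} ∪ {k',l} : Finset (Fin n)) = {k,l,k'} := by
      ext x; simp only [Finset.mem_union, Finset.mem_insert, Finset.mem_singleton]; tauto
    rw [hu, card3 k l k' h3 h1 h4,
      if_pos (show k < l ∧ k' < l from ⟨hkl, hk'l'⟩),
      if_neg (show ¬(k < l ∧ k' < l ∧ k = k' ∧ l = l) from fun h => h1 h.2.2.1),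
      if_neg (show ¬(k < l ∧ k' < l ∧ k = k') from fun h => h1 h.2.2),
      if_neg (show ¬(k < l ∧ k' < l ∧ k = l) from fun h => h3 h.2.2),
      if_neg (show ¬(k < l ∧ k' < l ∧ l = k') from fun h => h4 h.2.2),
      if_pos (show k < l ∧ k' < l ∧ l = l from ⟨hkl, hk'l', rfl⟩)]
    ring
  · by_cases h3 : k = l' <;> by_cases h4 : l = k'
    · exfalso
      rw [← h3] at hk'l'
      rw [h4] at hkl
      exact absurd (hk'l'.trans hkl) (lt_irrefl _)
    · -- k = l' only
      subst h3
      have hu : ({k,l} ∪ {k',k} : Finset (Fin n)) = {k,l,k'} := by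
        ext x; simp only [Finset.mem_union, Finset.mem_insert, Finset.mem_singleton]; tauto
      have e4 : ¬ l = k := (ne_of_lt hkl).symm
      rw [hu, card3 k l k' (ne_of_lt hkl) h1 h4,
        if_pos (show k < l ∧ k' < k from ⟨hkl, hk'l'⟩),
        if_neg (show ¬(k < l ∧ k' < k ∧ k = k' ∧ l = k) from fun h => h1 h.2.2.1),
        if_neg (show ¬(k < l ∧ k' < k ∧ k = k') from fun h => h1 h.2.2),
        if_pos (show k < l ∧ k' < k ∧ k = k from ⟨hkl, hk'l', rfl⟩),
        if_neg (show ¬(k < l ∧ k' < k ∧ l = k') from fun h => h4 h.2.2),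
        if_neg (show ¬(k < l ∧ k' < k ∧ l = k) from fun h => e4 h.2.2)]
      ring
    · -- l = k' only
      subst h4
      have hu : ({k,l} ∪ {l,l'} : Finset (Fin n)) = {k,l,l'} := by
        ext x; simp only [Finset.mem_union, Finset.mem_insert, Finset.mem_singleton]; tauto
      rw [hu, card3 k l l' (ne_of_lt hkl) h3 h2,
        if_pos (show k < l ∧ l < l' from ⟨hkl, hk'l'⟩),
        if_neg (show ¬(k < l ∧ l < l' ∧ k = l ∧ l = l') from fun h => h1 h.2.2.1),
        if_neg (show ¬(k < l ∧ l < l' ∧ k = l) from fun h => h1 h.2.2),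
        if_neg (show ¬(k < l ∧ l < l' ∧ k = l') from fun h => h3 h.2.2),
        if_pos (show k < l ∧ l < l' ∧ l = l from ⟨hkl, hk'l', rfl⟩),
        if_neg (show ¬(k < l ∧ l < l' ∧ l = l') from fun h => h2 h.2.2)]
      ring
    · -- all distinct
      have hu : ({k,l} ∪ {k',l'} : Finset (Fin n)) = {k,l,k',l'} := by
        ext x; simp only [Finset.mem_union, Finset.mem_insert, Finset.mem_singleton]; tauto
      rw [hu, card4 k l k' l' (ne_of_lt hkl) h1 h3 h4 h2 (ne_of_lt hk'l')]
      have hpow : (1 - 2*p^2 + p^4 : ℝ) = (1-p^2)^2 := by ring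
      rw [hpow, ← pow_mul, mul_comm 2 m, pow_mul,
        if_pos (show k < l ∧ k' < l' from ⟨hkl, hk'l'⟩),
        if_neg (show ¬(k < l ∧ k' < l' ∧ k = k' ∧ l = l') from fun h => h1 h.2.2.1),
        if_neg (show ¬(k < l ∧ k' < l' ∧ k = k') from fun h => h1 h.2.2),
        if_neg (show ¬(k < l ∧ k' < l' ∧ k = l') from fun h => h3 h.2.2),
        if_neg (show ¬(k < l ∧ k' < l' ∧ l = k') from fun h => h4 h.2.2),
        if_neg (show ¬(k < l ∧ k' < l' ∧ l = l') from fun h => h2 h.2.2)]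
      ring



lemma EE_GG (n m : ℕ) (p : ℝ) (k l k' l' : Fin n) :
    EE n m p (fun ω => (if k < l then Yf m k l ω - (1-p^2)^m else 0) *
                       (if k' < l' then Yf m k' l' ω - (1-p^2)^m else 0))
    = if k < l ∧ k' < l' then
        (1 - 2*p^2 + p ^ (({k,l} ∪ {k',l'} : Finset (Fin n)).card)) ^ m - ((1-p^2)^m)^2
      else 0 := by
  by_cases hkl : k < l
  · by_cases hk'l' : k' < l'
    · rw [if_pos ⟨hkl, hk'l'⟩]
      have h1 : (fun ω : Om n m => (if k < l then Yf m k l ω - (1-p^2)^m else 0) *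
          (if k' < l' then Yf m k' l' ω - (1-p^2)^m else 0))
          = fun ω => Yf m k l ω * Yf m k' l' ω
            - ((1-p^2)^m * Yf m k l ω
                + ((1-p^2)^m * Yf m k' l' ω - (1-p^2)^m * (1-p^2)^m)) := by
        funext ω; rw [if_pos hkl, if_pos hk'l']; ring
      rw [h1, EE_sub, EE_add, EE_smul, EE_sub, EE_smul, EE_const,
        EE_YfYf n m p k l k' l' (ne_of_lt hkl) (ne_of_lt hk'l'),
        EE_Yf n m p k l (ne_of_lt hkl), EE_Yf n m p k' l' (ne_of_lt hk'l')]
      ring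
    · rw [if_neg (fun h => hk'l' h.2)]
      have h1 : (fun ω : Om n m => (if k < l then Yf m k l ω - (1-p^2)^m else 0) *
          (if k' < l' then Yf m k' l' ω - (1-p^2)^m else 0)) = fun _ => (0:ℝ) :=
        funext fun ω => by rw [if_neg hk'l', mul_zero]
      rw [h1, EE_const]
  · rw [if_neg (fun h => hkl h.1)]
    have h1 : (fun ω : Om n m => (if k < l then Yf m k l ω - (1-p^2)^m else 0) *
        (if k' < l' then Yf m k' l' ω - (1-p^2)^m else 0)) = fun _ => (0:ℝ) :=
      funext fun ω => by rw [if_neg hkl, zero_mul]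
    rw [h1, EE_const]

lemma var_NE (n m : ℕ) (p : ℝ) :
    VarE n m p (NE n m) = ∑ k : Fin n, ∑ k' : Fin n, ∑ l : Fin n, ∑ l' : Fin n,
      EE n m p (fun ω => (if k < l then Yf m k l ω - (1-p^2)^m else 0) *
                         (if k' < l' then Yf m k' l' ω - (1-p^2)^m else 0)) := by
  classical
  have hEZ : EE n m p (fun ω => ∑ k : Fin n, ∑ l : Fin n, (if k < l then Yf m k l ω else 0))
      = ∑ k : Fin n, ∑ l : Fin n, (if k < l then (1-p^2)^m else 0) := by
    rw [EE_sum]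
    refine Finset.sum_congr rfl fun k _ => ?_
    rw [EE_sum]
    refine Finset.sum_congr rfl fun l _ => ?_
    by_cases h : k < l
    · simp only [if_pos h]
      exact EE_Yf n m p k l (ne_of_lt h)
    · simp only [if_neg h]
      exact EE_const n m p 0
  have hENE : EE n m p (NE n m) = (∑ k : Fin n, ∑ l : Fin n, if k < l then (1:ℝ) else 0)
      - ∑ k : Fin n, ∑ l : Fin n, (if k < l then (1-p^2)^m else 0) := by
    have h1 : NE n m = fun ω => (∑ k : Fin n, ∑ l : Fin n, if k < l then (1:ℝ) else 0)
        - ∑ k : Fin n, ∑ l : Fin n, (if k < l then Yf m k l ω else 0) :=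
      funext fun ω => NE_eq n m ω
    rw [h1, EE_sub, EE_const, hEZ]
  unfold VarE
  rw [hENE]
  have h2 : (fun ω => (NE n m ω - ((∑ k : Fin n, ∑ l : Fin n, if k < l then (1:ℝ) else 0)
        - ∑ k : Fin n, ∑ l : Fin n, (if k < l then (1-p^2)^m else 0)))^2)
      = fun ω => ∑ k : Fin n, ∑ k' : Fin n, ∑ l : Fin n, ∑ l' : Fin n,
          ((if k < l then Yf m k l ω - (1-p^2)^m else 0) *
            (if k' < l' then Yf m k' l' ω - (1-p^2)^m else 0)) := by
    funext ω
    rw [NE_eq n m ω]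
    rw [show ∀ (Cc Zw EZ : ℝ), (Cc - Zw - (Cc - EZ))^2 = (Zw - EZ)^2 from fun _ _ _ => by ring]
    have h5 : (∑ k : Fin n, ∑ l : Fin n, (if k < l then Yf m k l ω else 0))
        - (∑ k : Fin n, ∑ l : Fin n, (if k < l then (1-p^2)^m else 0))
        = ∑ k : Fin n, ∑ l : Fin n, (if k < l then Yf m k l ω - (1-p^2)^m else 0) := by
      rw [← Finset.sum_sub_distrib]
      refine Finset.sum_congr rfl fun k _ => ?_
      rw [← Finset.sum_sub_distrib]
      refine Finset.sum_congr rfl fun l _ => ?_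
      by_cases h : k < l <;> simp [h]
    rw [h5, pow_two, Finset.sum_mul_sum]
    refine Finset.sum_congr rfl fun k _ => ?_
    refine Finset.sum_congr rfl fun k' _ => ?_
    rw [Finset.sum_mul_sum]
  rw [h2, EE_sum]
  refine Finset.sum_congr rfl fun k _ => ?_
  rw [EE_sum]
  refine Finset.sum_congr rfl fun k' _ => ?_
  rw [EE_sum]
  refine Finset.sum_congr rfl fun l _ => ?_
  rw [EE_sum]


def cI (n : ℕ) (x : Fin n) : ℝ := ∑ y : Fin n, if x < y then 1 else 0
def dI (n : ℕ) (x : Fin n) : ℝ := ∑ y : Fin n, if y < x then 1 else 0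

lemma sum_if_const {α : Type*} [Fintype α] (c : Prop) [Decidable c] (f : α → ℝ) :
    ∑ y : α, (if c then f y else 0) = if c then ∑ y : α, f y else 0 := by
  split_ifs <;> simp

lemma cd_sum (n : ℕ) (x : Fin n) : cI n x + dI n x = (n : ℝ) - 1 := by
  unfold cI dI
  rw [← Finset.sum_add_distrib]
  have h : ∀ y : Fin n, ((if x < y then (1:ℝ) else 0) + (if y < x then 1 else 0))
      = 1 - (if y = x then 1 else 0) := by
    intro y
    rcases lt_trichotomy x y with h | h | h
    · simp [h, asymm h, h.ne']
    · subst h; simp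
    · simp [h, asymm h, h.ne]
  simp_rw [h]
  rw [Finset.sum_sub_distrib, Finset.sum_const, Finset.card_univ, Fintype.card_fin,
    nsmul_eq_mul, mul_one, Finset.sum_ite_eq' Finset.univ x (fun _ => (1:ℝ)),
    if_pos (Finset.mem_univ x)]

lemma sum_Se (n : ℕ) : (∑ k : Fin n, ∑ k' : Fin n, ∑ l : Fin n, ∑ l' : Fin n,
      if k < l ∧ k' < l' ∧ k = k' ∧ l = l' then (1:ℝ) else 0)
    = ∑ k : Fin n, ∑ l : Fin n, if k < l then (1:ℝ) else 0 := by
  refine Finset.sum_congr rfl fun k _ => ?_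
  rw [show (∑ k' : Fin n, ∑ l : Fin n, ∑ l' : Fin n,
        if k < l ∧ k' < l' ∧ k = k' ∧ l = l' then (1:ℝ) else 0)
      = ∑ k' : Fin n, (if k = k' then ∑ l : Fin n, ∑ l' : Fin n,
            (if l = l' then (if k < l ∧ k' < l' then (1:ℝ) else 0) else 0) else 0) from ?_]
  · rw [Finset.sum_ite_eq Finset.univ k, if_pos (Finset.mem_univ k)]
    refine Finset.sum_congr rfl fun l _ => ?_
    rw [Finset.sum_ite_eq Finset.univ l
      (fun l' => if k < l ∧ k < l' then (1:ℝ) else 0), if_pos (Finset.mem_univ l)]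
    by_cases h : k < l
    · rw [if_pos ⟨h, h⟩, if_pos h]
    · rw [if_neg (fun hh => h hh.1), if_neg h]
  · refine Finset.sum_congr rfl fun k' _ => ?_
    rw [← sum_if_const (k = k')]
    refine Finset.sum_congr rfl fun l _ => ?_
    rw [← sum_if_const (k = k')]
    refine Finset.sum_congr rfl fun l' _ => ?_
    by_cases h1 : k = k' <;> by_cases h2 : l = l' <;> by_cases h3 : k < l ∧ k' < l' <;>
      simp [h1, h2, h3] <;> tauto

lemma sum_T1 (n : ℕ) : (∑ k : Fin n, ∑ k' : Fin n, ∑ l : Fin n, ∑ l' : Fin n,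
      if k < l ∧ k' < l' ∧ k = k' then (1:ℝ) else 0)
    = ∑ x : Fin n, cI n x * cI n x := by
  refine Finset.sum_congr rfl fun k _ => ?_
  rw [show (∑ k' : Fin n, ∑ l : Fin n, ∑ l' : Fin n,
        if k < l ∧ k' < l' ∧ k = k' then (1:ℝ) else 0)
      = ∑ k' : Fin n, (if k = k' then ∑ l : Fin n, ∑ l' : Fin n,
          ((if k < l then (1:ℝ) else 0) * (if k' < l' then 1 else 0)) else 0) from ?_]
  · rw [Finset.sum_ite_eq Finset.univ k, if_pos (Finset.mem_univ k)]
    unfold cI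
    rw [Finset.sum_mul_sum]
  · refine Finset.sum_congr rfl fun k' _ => ?_
    rw [← sum_if_const (k = k')]
    refine Finset.sum_congr rfl fun l _ => ?_
    rw [← sum_if_const (k = k')]
    refine Finset.sum_congr rfl fun l' _ => ?_
    by_cases h1 : k = k' <;> by_cases h2 : k < l <;> by_cases h3 : k' < l' <;>
      simp [h1, h2, h3]

lemma sum_T2 (n : ℕ) : (∑ k : Fin n, ∑ k' : Fin n, ∑ l : Fin n, ∑ l' : Fin n,
      if k < l ∧ k' < l' ∧ l = l' then (1:ℝ) else 0)
    = ∑ x : Fin n, dI n x * dI n x := by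
  have step1 : ∀ k k' l : Fin n, (∑ l' : Fin n, if k < l ∧ k' < l' ∧ l = l' then (1:ℝ) else 0)
      = if k < l ∧ k' < l then (1:ℝ) else 0 := by
    intro k k' l
    rw [show (∑ l' : Fin n, if k < l ∧ k' < l' ∧ l = l' then (1:ℝ) else 0)
        = ∑ l' : Fin n, (if l = l' then (if k < l ∧ k' < l' then (1:ℝ) else 0) else 0) from
      Finset.sum_congr rfl fun l' _ => by
        by_cases h1 : l = l' <;> by_cases h2 : k < l <;> by_cases h3 : k' < l' <;>
          simp [h1, h2, h3]]
    rw [Finset.sum_ite_eq Finset.univ l, if_pos (Finset.mem_univ l)]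
  simp_rw [step1]
  rw [show (∑ k : Fin n, ∑ k' : Fin n, ∑ l : Fin n, if k < l ∧ k' < l then (1:ℝ) else 0)
      = ∑ k : Fin n, ∑ l : Fin n, ∑ k' : Fin n, if k < l ∧ k' < l then (1:ℝ) else 0 from
    Finset.sum_congr rfl fun k _ => Finset.sum_comm]
  rw [Finset.sum_comm]
  refine Finset.sum_congr rfl fun l _ => ?_
  rw [show (∑ k : Fin n, ∑ k' : Fin n, if k < l ∧ k' < l then (1:ℝ) else 0)
      = ∑ k : Fin n, ∑ k' : Fin n, ((if k < l then (1:ℝ) else 0) * (if k' < l then 1 else 0)) from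
    Finset.sum_congr rfl fun k _ => Finset.sum_congr rfl fun k' _ => by
      by_cases h1 : k < l <;> by_cases h2 : k' < l <;> simp [h1, h2]]
  unfold dI
  rw [Finset.sum_mul_sum]

lemma sum_T3 (n : ℕ) : (∑ k : Fin n, ∑ k' : Fin n, ∑ l : Fin n, ∑ l' : Fin n,
      if k < l ∧ k' < l' ∧ k = l' then (1:ℝ) else 0)
    = ∑ x : Fin n, dI n x * cI n x := by
  have step1 : ∀ k k' l : Fin n, (∑ l' : Fin n, if k < l ∧ k' < l' ∧ k = l' then (1:ℝ) else 0)
      = if k < l ∧ k' < k then (1:ℝ) else 0 := by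
    intro k k' l
    rw [show (∑ l' : Fin n, if k < l ∧ k' < l' ∧ k = l' then (1:ℝ) else 0)
        = ∑ l' : Fin n, (if k = l' then (if k < l ∧ k' < l' then (1:ℝ) else 0) else 0) from
      Finset.sum_congr rfl fun l' _ => by
        by_cases h1 : k = l' <;> by_cases h2 : k < l <;> by_cases h3 : k' < l' <;>
          simp [h1, h2, h3]]
    rw [Finset.sum_ite_eq Finset.univ k, if_pos (Finset.mem_univ k)]
  simp_rw [step1]
  refine Finset.sum_congr rfl fun k _ => ?_
  rw [show (∑ k' : Fin n, ∑ l : Fin n, if k < l ∧ k' < k then (1:ℝ) else 0)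
      = ∑ k' : Fin n, ∑ l : Fin n, ((if k' < k then (1:ℝ) else 0) * (if k < l then 1 else 0)) from
    Finset.sum_congr rfl fun k' _ => Finset.sum_congr rfl fun l _ => by
      by_cases h1 : k' < k <;> by_cases h2 : k < l <;> simp [h1, h2]]
  unfold dI cI
  rw [Finset.sum_mul_sum]

lemma sum_T4 (n : ℕ) : (∑ k : Fin n, ∑ k' : Fin n, ∑ l : Fin n, ∑ l' : Fin n,
      if k < l ∧ k' < l' ∧ l = k' then (1:ℝ) else 0)
    = ∑ x : Fin n, dI n x * cI n x := by
  have step1 : ∀ k k' : Fin n, (∑ l : Fin n, ∑ l' : Fin n,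
        if k < l ∧ k' < l' ∧ l = k' then (1:ℝ) else 0)
      = (if k < k' then (1:ℝ) else 0) * cI n k' := by
    intro k k'
    rw [show (∑ l : Fin n, ∑ l' : Fin n, if k < l ∧ k' < l' ∧ l = k' then (1:ℝ) else 0)
        = ∑ l : Fin n, (if k' = l then
            ((if k < l then (1:ℝ) else 0) * ∑ l' : Fin n, (if k' < l' then (1:ℝ) else 0))
          else 0) from ?_]
    · rw [Finset.sum_ite_eq Finset.univ k', if_pos (Finset.mem_univ k')]
      rfl
    · refine Finset.sum_congr rfl fun l _ => ?_
      by_cases h1 : k' = l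
      · rw [if_pos h1, Finset.mul_sum]
        refine Finset.sum_congr rfl fun l' _ => ?_
        have hl : l = k' := h1.symm
        by_cases h2 : k < l <;> by_cases h3 : k' < l' <;> simp [h2, h3, hl]
      · rw [if_neg h1]
        refine Finset.sum_eq_zero fun l' _ => ?_
        rw [if_neg (fun hh => h1 hh.2.2.symm)]
  simp_rw [step1]
  rw [Finset.sum_comm]
  refine Finset.sum_congr rfl fun k' _ => ?_
  rw [← Finset.sum_mul]
  rfl

lemma sum_P2 (n : ℕ) : (∑ k : Fin n, ∑ l : Fin n, if k < l then (1:ℝ) else 0)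
      + (∑ k : Fin n, ∑ l : Fin n, if k < l then (1:ℝ) else 0)
    = (n:ℝ)^2 - n := by
  have h1 : (∑ k : Fin n, ∑ l : Fin n, if k < l then (1:ℝ) else 0)
      = ∑ k : Fin n, ∑ l : Fin n, if l < k then (1:ℝ) else 0 := by
    rw [Finset.sum_comm]
  nth_rewrite 2 [h1]
  rw [← Finset.sum_add_distrib]
  rw [show (∑ k : Fin n, ((∑ l : Fin n, if k < l then (1:ℝ) else 0)
      + ∑ l : Fin n, if l < k then (1:ℝ) else 0)) = ∑ _k : Fin n, ((n:ℝ) - 1) from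
    Finset.sum_congr rfl fun k _ => cd_sum n k]
  rw [Finset.sum_const, Finset.card_univ, Fintype.card_fin, nsmul_eq_mul]
  ring



lemma choose2_cast (a : ℕ) : (((a+2).choose 2 : ℕ) : ℝ) * 2 = ((a:ℝ)+2) * ((a:ℝ)+1) := by
  induction a with
  | zero => norm_num
  | succ b ih =>
    have e : b+1+2 = b+2+1 := by omega
    rw [e, Nat.choose_succ_succ (b+2) 1, Nat.choose_one_right]
    push_cast
    push_cast at ih
    linear_combination ih

lemma choose3_cast (a : ℕ) : (((a+3).choose 3 : ℕ) : ℝ) * 6 = ((a:ℝ)+3) * ((a:ℝ)+2) * ((a:ℝ)+1) := by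
  induction a with
  | zero => norm_num
  | succ b ih =>
    have e : b+1+3 = b+3+1 := by omega
    have h2 := choose2_cast (b+1)
    have e2 : b+1+2 = b+3 := by omega
    rw [e2] at h2
    rw [e, Nat.choose_succ_succ (b+3) 2]
    push_cast
    push_cast at ih h2
    linear_combination ih + 3 * h2

/-- the exact variance of the number of edges in `G(n,m,p)`
(Lemma 3.1, formula (3.1)). -/
theorem stmt6 (n m : ℕ) (p : ℝ) (hn : 3 ≤ n) (hm : 3 ≤ m)
    (hp0 : 0 < p) (hp1 : p < 1) :
    VarE n m p (NE n m) =
      (n.choose 2 : ℝ) * (phat m p * (1 - phat m p)) +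
        6 * (n.choose 3 : ℝ) *
          ((1 - 2 * p ^ 2 + p ^ 3) ^ m - (1 - phat m p) ^ 2) := by
  obtain ⟨a, rfl⟩ : ∃ a, n = a + 3 := ⟨n - 3, by omega⟩
  rw [var_NE]
  have h1 : ∀ (k k' l l' : Fin (a+3)),
      EE (a+3) m p (fun ω => (if k < l then Yf m k l ω - (1-p^2)^m else 0) *
                         (if k' < l' then Yf m k' l' ω - (1-p^2)^m else 0))
      = ((1-p^2)^m - ((1-p^2)^m)^2) * (if k < l ∧ k' < l' ∧ k = k' ∧ l = l' then 1 else 0)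
        + ((1-2*p^2+p^3)^m - ((1-p^2)^m)^2) *
          ((if k < l ∧ k' < l' ∧ k = k' then 1 else 0)
            + (if k < l ∧ k' < l' ∧ k = l' then 1 else 0)
            + (if k < l ∧ k' < l' ∧ l = k' then 1 else 0)
            + (if k < l ∧ k' < l' ∧ l = l' then 1 else 0)
            - 2 * (if k < l ∧ k' < l' ∧ k = k' ∧ l = l' then 1 else 0)) :=
    fun k k' l l' => (EE_GG (a+3) m p k l k' l').trans (cov_split (a+3) m p k l k' l')
  simp only [h1, Finset.sum_add_distrib, Finset.sum_sub_distrib, ← Finset.mul_sum]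
  rw [sum_Se, sum_T1, sum_T2, sum_T3, sum_T4]
  have key : (∑ x : Fin (a+3), cI (a+3) x * cI (a+3) x)
      + (∑ x : Fin (a+3), dI (a+3) x * dI (a+3) x)
      + 2 * (∑ x : Fin (a+3), dI (a+3) x * cI (a+3) x)
      = ((a+3:ℕ):ℝ) * (((a+3:ℕ):ℝ)-1)^2 := by
    rw [Finset.mul_sum, ← Finset.sum_add_distrib, ← Finset.sum_add_distrib]
    rw [show (∑ x : Fin (a+3), (cI (a+3) x * cI (a+3) x + dI (a+3) x * dI (a+3) x
          + 2 * (dI (a+3) x * cI (a+3) x)))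
        = ∑ _x : Fin (a+3), (((a+3:ℕ):ℝ)-1)^2 from
      Finset.sum_congr rfl fun x _ => by
        have h := cd_sum (a+3) x
        calc cI (a+3) x * cI (a+3) x + dI (a+3) x * dI (a+3) x
            + 2 * (dI (a+3) x * cI (a+3) x) = (cI (a+3) x + dI (a+3) x)^2 := by ring
          _ = (((a+3:ℕ):ℝ)-1)^2 := by rw [h]]
    rw [Finset.sum_const, Finset.card_univ, Fintype.card_fin, nsmul_eq_mul]
  have hP2 := sum_P2 (a+3)
  have hc2 := choose2_cast (a+1)
  have e2 : a+1+2 = a+3 := by omega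
  rw [e2] at hc2
  have hc3 := choose3_cast a
  simp only [phat]
  push_cast at hc2 hc3 hP2 key ⊢
  linear_combination
    (((1-p^2)^m - ((1-p^2)^m)^2)/2 - ((1-2*p^2+p^3)^m - ((1-p^2)^m)^2)) * hP2
    + ((1-2*p^2+p^3)^m - ((1-p^2)^m)^2) * key
    - (((1-p^2)^m - ((1-p^2)^m)^2)/2) * hc2
    - ((1-2*p^2+p^3)^m - ((1-p^2)^m)^2) * hc3


end

end RIG
end

section
/- Let F, F', G, G' be graphs on the same vertex set such that F is isomorphic to F', |E(G)| = |E(G')|, and E(F)∩E(G) = E(F')∩E(G') = ∅. Let 𝒦(F,G) denote the family of all clique covers 𝒞 of F∪G satisfying E(G) ⊆ 𝒞 ⊆ 𝒫(F∪G)\E(F) (edges viewed as 2-element vertex sets). Then π(F∪G, 𝒦(F,G)) = π(F'∪G', 𝒦(F',G')), where π(H, 𝒦) := Σ_{𝒞∈𝒦} π(H, 𝒞) and π(H, 𝒞) is the probability that H is given by precisely the clique cover 𝒞 in G(n,m,p). -/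
open Finset MeasureTheory ProbabilityTheory Filter Topology

namespace RIG

noncomputable section

/-! ### Auxiliary development for Statement 11 -/

section Stmt11Aux

variable {n m : ℕ}

/-- The trace of attribute `a` on the vertex set `S`. -/
def trS (S : Finset (Fin n)) (ω : Om n m) (a : Fin m) : Finset (Fin n) :=
  S.filter (fun v => ω v a = true)

lemma trS_subset (S : Finset (Fin n)) (ω : Om n m) (a : Fin m) :
    trS S ω a ⊆ S := Finset.filter_subset _ _

lemma builds_iff_trS {S C : Finset (Fin n)} (hC : C ⊆ S) (ω : Om n m) (a : Fin m) :
    Builds n m ω a S C ↔ trS S ω a = C := by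
  constructor
  · rintro ⟨h1, h2⟩
    ext v
    simp only [trS, Finset.mem_filter]
    constructor
    · rintro ⟨hvS, hva⟩
      by_contra hvC
      simp [h2 v hvS hvC] at hva
    · intro hvC
      exact ⟨hC hvC, h1 v hvC⟩
  · intro h
    subst h
    constructor
    · intro v hv
      exact (Finset.mem_filter.1 hv).2
    · intro v hvS hv
      simp only [trS, Finset.mem_filter, not_and] at hv
      simpa using hv hvS

lemma mem_Pcal_iff {S : Finset (Fin n)} {E : Finset (Finset (Fin n))} {C : Finset (Fin n)} :
    C ∈ Pcal n S E ↔ C ⊆ S ∧ ∃ e ∈ E, e ⊆ C := by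
  simp [Pcal]

open Classical in
/-- The family of sets in `𝒫(H)` built by some attribute. -/
def BsetS (m : ℕ) (S : Finset (Fin n)) (E : Finset (Finset (Fin n))) (ω : Om n m) :
    Finset (Finset (Fin n)) :=
  (Pcal n S E).filter (fun C => ∃ a : Fin m, Builds n m ω a S C)

lemma mem_BsetS {S C : Finset (Fin n)} {E : Finset (Finset (Fin n))} {ω : Om n m} :
    C ∈ BsetS m S E ω ↔ C ∈ Pcal n S E ∧ ∃ a : Fin m, Builds n m ω a S C := by
  classical
  simp [BsetS]

/-- The event whose probability is `∑_{𝒞 ∈ 𝒦(F,G)} π(F∪G, 𝒞)`. -/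
def EvtS (m : ℕ) (S : Finset (Fin n)) (EF EG : Finset (Finset (Fin n))) (ω : Om n m) : Prop :=
  (∀ e ∈ EG, ∃ a : Fin m, trS S ω a = e) ∧
    ∀ e ∈ EF, (∀ a : Fin m, trS S ω a ≠ e) ∧ ∃ a : Fin m, e ⊆ trS S ω a

instance {S : Finset (Fin n)} {EF EG : Finset (Finset (Fin n))} {ω : Om n m} :
    Decidable (EvtS m S EF EG ω) := by unfold EvtS; infer_instance

lemma givenBy_iff_BsetS {S : Finset (Fin n)} {E 𝒞 : Finset (Finset (Fin n))}
    (h𝒞 : 𝒞 ⊆ Pcal n S E) (ω : Om n m) :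
    GivenBy n m ω S E 𝒞 ↔ BsetS m S E ω = 𝒞 := by
  constructor
  · rintro ⟨h1, h2⟩
    ext C
    rw [mem_BsetS]
    constructor
    · rintro ⟨hCP, a, hb⟩
      by_contra hC
      exact h2 C hCP hC a hb
    · intro hC
      exact ⟨h𝒞 hC, h1 C hC⟩
  · rintro rfl
    constructor
    · intro C hC
      exact (mem_BsetS.1 hC).2
    · intro C hCP hC a hb
      exact hC (mem_BsetS.2 ⟨hCP, a, hb⟩)

lemma evt_iff_mem_Kfam {S : Finset (Fin n)} {EF EG : Finset (Finset (Fin n))}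
    (hEF : ∀ e ∈ EF, e ⊆ S ∧ e.card = 2)
    (hEG : ∀ e ∈ EG, e ⊆ S ∧ e.card = 2) (ω : Om n m) :
    EvtS m S EF EG ω ↔ BsetS m S (EF ∪ EG) ω ∈ Kfam n S EF EG := by
  classical
  have hBP : BsetS m S (EF ∪ EG) ω ⊆ Pcal n S (EF ∪ EG) := Finset.filter_subset _ _
  rw [Kfam, Finset.mem_filter, Finset.mem_powerset]
  constructor
  · rintro ⟨hG, hF⟩
    have hEGB : EG ⊆ BsetS m S (EF ∪ EG) ω := by
      intro e he
      obtain ⟨a, ha⟩ := hG e he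
      refine mem_BsetS.2 ⟨mem_Pcal_iff.2 ⟨(hEG e he).1, e, Finset.mem_union_right _ he,
        subset_rfl⟩, a, ?_⟩
      exact (builds_iff_trS (hEG e he).1 ω a).2 ha
    refine ⟨hBP, ⟨hBP, ?_⟩, hEGB, ?_⟩
    · intro e he
      rcases Finset.mem_union.1 he with heF | heG
      · obtain ⟨a, ha⟩ := (hF e heF).2
        refine ⟨trS S ω a, mem_BsetS.2 ⟨mem_Pcal_iff.2 ⟨trS_subset S ω a, e,
          Finset.mem_union_left _ heF, ha⟩, a, (builds_iff_trS (trS_subset S ω a) ω a).2 rfl⟩, ha⟩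
      · exact ⟨e, hEGB heG, subset_rfl⟩
    · rw [Finset.disjoint_left]
      intro C hCB hCF
      obtain ⟨hCP, a, hb⟩ := mem_BsetS.1 hCB
      have hCS : C ⊆ S := (mem_Pcal_iff.1 hCP).1
      exact (hF C hCF).1 a ((builds_iff_trS hCS ω a).1 hb)
  · rintro ⟨-, ⟨-, hcov⟩, hEGB, hdisj⟩
    constructor
    · intro e he
      obtain ⟨hCP, a, hb⟩ := mem_BsetS.1 (hEGB he)
      exact ⟨a, (builds_iff_trS (hEG e he).1 ω a).1 hb⟩
    · intro e he
      constructor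
      · intro a ha
        have heB : e ∈ BsetS m S (EF ∪ EG) ω :=
          mem_BsetS.2 ⟨mem_Pcal_iff.2 ⟨(hEF e he).1, e, Finset.mem_union_left _ he, subset_rfl⟩,
            a, (builds_iff_trS (hEF e he).1 ω a).2 ha⟩
        exact (Finset.disjoint_left.1 hdisj) heB he
      · obtain ⟨C, hCB, heC⟩ := hcov e (Finset.mem_union_left _ he)
        obtain ⟨hCP, a, hb⟩ := mem_BsetS.1 hCB
        have hCS : C ⊆ S := (mem_Pcal_iff.1 hCP).1
        exact ⟨a, by rw [(builds_iff_trS hCS ω a).1 hb]; exact heC⟩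

lemma sum_piCC_eq (p : ℝ) (S : Finset (Fin n)) (EF EG : Finset (Finset (Fin n)))
    (hEF : ∀ e ∈ EF, e ⊆ S ∧ e.card = 2)
    (hEG : ∀ e ∈ EG, e ⊆ S ∧ e.card = 2) :
    ∑ 𝒞 ∈ Kfam n S EF EG, piCC n m p S (EF ∪ EG) 𝒞 =
      ∑ ω : Om n m, if EvtS m S EF EG ω then Wt n m p ω else 0 := by
  classical
  simp only [piCC, Pr]
  rw [Finset.sum_comm]
  refine Finset.sum_congr rfl fun ω _ => ?_
  have h1 : ∀ 𝒞 ∈ Kfam n S EF EG,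
      Set.indicator {ω' : Om n m | GivenBy n m ω' S (EF ∪ EG) 𝒞} (Wt n m p) ω
        = if BsetS m S (EF ∪ EG) ω = 𝒞 then Wt n m p ω else 0 := by
    intro 𝒞 h𝒞
    have h𝒞P : 𝒞 ⊆ Pcal n S (EF ∪ EG) := by
      rw [Kfam, Finset.mem_filter, Finset.mem_powerset] at h𝒞
      exact h𝒞.1
    rw [Set.indicator_apply]
    simp only [Set.mem_setOf_eq]
    congr 1
    simp [givenBy_iff_BsetS h𝒞P ω]
  rw [Finset.sum_congr rfl h1, Finset.sum_ite_eq]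
  by_cases h : EvtS m S EF EG ω
  · rw [if_pos ((evt_iff_mem_Kfam hEF hEG ω).1 h), if_pos h]
  · rw [if_neg (fun hh => h ((evt_iff_mem_Kfam hEF hEG ω).2 hh)), if_neg h]

end Stmt11Aux


section Stmt11Psi

variable {n m : ℕ}

/-- Swap two disjoint finsets via a given bijection, fixing everything else. -/
def swapFun {α : Type*} [DecidableEq α] (A B : Finset α)
    (g : {x // x ∈ A} ≃ {x // x ∈ B}) (x : α) : α :=
  if hx : x ∈ A then (g ⟨x, hx⟩ : {x // x ∈ B}) else
    if hx : x ∈ B then (g.symm ⟨x, hx⟩ : {x // x ∈ A}) else x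

lemma swapFun_memA {α : Type*} [DecidableEq α] {A B : Finset α}
    (g : {x // x ∈ A} ≃ {x // x ∈ B}) {x : α} (hx : x ∈ A) :
    swapFun A B g x = (g ⟨x, hx⟩ : {x // x ∈ B}) := dif_pos hx

lemma swapFun_memB {α : Type*} [DecidableEq α] {A B : Finset α}
    (g : {x // x ∈ A} ≃ {x // x ∈ B}) (hd : Disjoint A B) {x : α} (hx : x ∈ B) :
    swapFun A B g x = (g.symm ⟨x, hx⟩ : {x // x ∈ A}) := by
  rw [swapFun, dif_neg (Finset.disjoint_right.1 hd hx), dif_pos hx]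

lemma swapFun_other {α : Type*} [DecidableEq α] {A B : Finset α}
    (g : {x // x ∈ A} ≃ {x // x ∈ B}) {x : α} (hxA : x ∉ A) (hxB : x ∉ B) :
    swapFun A B g x = x := by
  rw [swapFun, dif_neg hxA, dif_neg hxB]

lemma swapFun_involutive {α : Type*} [DecidableEq α] {A B : Finset α}
    (g : {x // x ∈ A} ≃ {x // x ∈ B}) (hd : Disjoint A B) :
    Function.Involutive (swapFun A B g) := by
  intro x
  by_cases hx : x ∈ A
  · rw [swapFun_memA g hx]
    have hyB : ((g ⟨x, hx⟩ : {x // x ∈ B}) : α) ∈ B := (g ⟨x, hx⟩).2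
    rw [swapFun_memB g hd hyB]
    have h1 : (⟨((g ⟨x, hx⟩ : {x // x ∈ B}) : α), hyB⟩ : {x // x ∈ B}) = g ⟨x, hx⟩ :=
      Subtype.ext rfl
    rw [h1, Equiv.symm_apply_apply]
  · by_cases hx' : x ∈ B
    · rw [swapFun_memB g hd hx']
      have hyA : ((g.symm ⟨x, hx'⟩ : {x // x ∈ A}) : α) ∈ A := (g.symm ⟨x, hx'⟩).2
      rw [swapFun_memA g hyA]
      have h1 : (⟨((g.symm ⟨x, hx'⟩ : {x // x ∈ A}) : α), hyA⟩ : {x // x ∈ A}) =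
          g.symm ⟨x, hx'⟩ := Subtype.ext rfl
      rw [h1, Equiv.apply_symm_apply]
    · rw [swapFun_other g hx hx', swapFun_other g hx hx']

/-- Trace-level transformation of a sample point. -/
def PsiS (m : ℕ) (S : Finset (Fin n)) (Θ : Finset (Fin n) → Finset (Fin n)) (ω : Om n m) :
    Om n m :=
  fun v a => if v ∈ S then decide (v ∈ Θ (trS S ω a)) else ω v a

lemma trS_PsiS {S : Finset (Fin n)} {Θ : Finset (Fin n) → Finset (Fin n)}
    (hΘS : ∀ T, T ⊆ S → Θ T ⊆ S) (ω : Om n m) (a : Fin m) :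
    trS S (PsiS m S Θ ω) a = Θ (trS S ω a) := by
  ext v
  show v ∈ Finset.filter (fun v => PsiS m S Θ ω v a = true) S ↔ _
  rw [Finset.mem_filter]
  simp only [PsiS]
  constructor
  · rintro ⟨hvS, hv⟩
    rw [if_pos hvS] at hv
    exact of_decide_eq_true hv
  · intro hv
    have hvS : v ∈ S := hΘS _ (trS_subset S ω a) hv
    exact ⟨hvS, by rw [if_pos hvS]; exact decide_eq_true hv⟩

lemma PsiS_PsiS {S : Finset (Fin n)} {Θ Θ' : Finset (Fin n) → Finset (Fin n)}
    (hΘS : ∀ T, T ⊆ S → Θ T ⊆ S)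
    (hinv : ∀ T, T ⊆ S → Θ' (Θ T) = T) (ω : Om n m) :
    PsiS m S Θ' (PsiS m S Θ ω) = ω := by
  funext v a
  by_cases hvS : v ∈ S
  · show (if v ∈ S then decide (v ∈ Θ' (trS S (PsiS m S Θ ω) a)) else (PsiS m S Θ ω) v a) = ω v a
    rw [if_pos hvS, trS_PsiS hΘS, hinv _ (trS_subset S ω a)]
    cases h : ω v a <;> simp [trS, hvS, h]
  · show (if v ∈ S then decide (v ∈ Θ' (trS S (PsiS m S Θ ω) a)) else (PsiS m S Θ ω) v a) = ω v a
    rw [if_neg hvS]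
    show (if v ∈ S then decide (v ∈ Θ (trS S ω a)) else ω v a) = ω v a
    rw [if_neg hvS]

lemma prod_if_mem (p : ℝ) (S D : Finset (Fin n)) (hD : D ⊆ S) :
    (∏ v ∈ S, if v ∈ D then p else 1 - p) = p ^ D.card * (1 - p) ^ (S.card - D.card) := by
  classical
  rw [Finset.prod_ite, Finset.prod_const, Finset.prod_const]
  congr 2
  · rw [Finset.filter_mem_eq_inter, Finset.inter_eq_right.2 hD]
  · have h1 : S.filter (fun v => v ∉ D) = S \ D := by
      ext v; simp [Finset.mem_sdiff, Finset.mem_filter]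
    rw [h1, Finset.card_sdiff_of_subset hD]

lemma Wt_eq_prod (p : ℝ) (ω : Om n m) :
    Wt n m p ω = ∏ a : Fin m, ∏ v : Fin n, (if ω v a then p else 1 - p) := by
  simp only [Wt, bw]
  rw [Finset.prod_comm]

lemma prod_col_eq (p : ℝ) (S : Finset (Fin n)) (ω : Om n m) (a : Fin m) :
    (∏ v : Fin n, if ω v a then p else 1 - p)
      = (p ^ (trS S ω a).card * (1 - p) ^ (S.card - (trS S ω a).card)) *
        ∏ v ∈ Sᶜ, (if ω v a then p else 1 - p) := by
  classical
  rw [← Finset.prod_mul_prod_compl S]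
  congr 1
  rw [← prod_if_mem p S _ (trS_subset S ω a)]
  refine Finset.prod_congr rfl fun v hv => ?_
  cases h : ω v a <;> simp [trS, hv, h]

lemma Wt_PsiS (p : ℝ) {S : Finset (Fin n)} {Θ : Finset (Fin n) → Finset (Fin n)}
    (hΘS : ∀ T, T ⊆ S → Θ T ⊆ S) (hΘc : ∀ T, T ⊆ S → (Θ T).card = T.card)
    (ω : Om n m) : Wt n m p (PsiS m S Θ ω) = Wt n m p ω := by
  rw [Wt_eq_prod, Wt_eq_prod]
  refine Finset.prod_congr rfl fun a _ => ?_
  rw [prod_col_eq p S, prod_col_eq p S, trS_PsiS hΘS, hΘc _ (trS_subset S ω a)]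
  congr 1
  refine Finset.prod_congr rfl fun v hv => ?_
  have hvS : v ∉ S := by simpa using hv
  show (if (if v ∈ S then decide (v ∈ Θ (trS S ω a)) else ω v a) then p else 1 - p) = _
  rw [if_neg hvS]

lemma EvtS_PsiS {S : Finset (Fin n)} {EF EF' EG EG' : Finset (Finset (Fin n))}
    (Θ : Finset (Fin n) ≃ Finset (Fin n)) (ψF : Finset (Fin n) → Finset (Fin n))
    (hΘS : ∀ T, T ⊆ S → Θ T ⊆ S)
    (hG : EG.image (⇑Θ) = EG')
    (hFim : EF.image ψF = EF')
    (hF1 : ∀ e ∈ EF, ∀ T, T ⊆ S → (Θ T = ψF e ↔ T = e))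
    (hF2 : ∀ e ∈ EF, ∀ T, T ⊆ S → (ψF e ⊆ Θ T ↔ e ⊆ T)) (ω : Om n m) :
    EvtS m S EF' EG' (PsiS m S (⇑Θ) ω) ↔ EvtS m S EF EG ω := by
  have htr : ∀ a, trS S (PsiS m S (⇑Θ) ω) a = Θ (trS S ω a) := trS_PsiS hΘS ω
  have hts : ∀ a, trS S ω a ⊆ S := trS_subset S ω
  simp only [EvtS]
  refine and_congr ?_ ?_
  · rw [← hG, Finset.forall_mem_image]
    refine forall₂_congr fun e he => exists_congr fun a => ?_
    rw [htr a]
    exact ⟨fun h => Θ.injective h, fun h => by rw [h]⟩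
  · rw [← hFim, Finset.forall_mem_image]
    refine forall₂_congr fun e he => and_congr ?_ ?_
    · refine forall_congr' fun a => not_congr ?_
      rw [htr a]
      exact hF1 e he _ (hts a)
    · refine exists_congr fun a => ?_
      rw [htr a]
      exact hF2 e he _ (hts a)

lemma sum_wt_evt (p : ℝ) {S : Finset (Fin n)} {EF EF' EG EG' : Finset (Finset (Fin n))}
    (Θ : Finset (Fin n) ≃ Finset (Fin n)) (ψF : Finset (Fin n) → Finset (Fin n))
    (hΘS : ∀ T, T ⊆ S → Θ T ⊆ S) (hΘS' : ∀ T, T ⊆ S → Θ.symm T ⊆ S)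
    (hΘc : ∀ T, T ⊆ S → (Θ T).card = T.card)
    (hG : EG.image (⇑Θ) = EG')
    (hFim : EF.image ψF = EF')
    (hF1 : ∀ e ∈ EF, ∀ T, T ⊆ S → (Θ T = ψF e ↔ T = e))
    (hF2 : ∀ e ∈ EF, ∀ T, T ⊆ S → (ψF e ⊆ Θ T ↔ e ⊆ T)) :
    (∑ ω : Om n m, if EvtS m S EF EG ω then Wt n m p ω else 0) =
      ∑ ω : Om n m, if EvtS m S EF' EG' ω then Wt n m p ω else 0 := by
  have hinv1 : ∀ T, T ⊆ S → Θ.symm (Θ T) = T := fun T _ => Θ.symm_apply_apply T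
  have hinv2 : ∀ T, T ⊆ S → Θ (Θ.symm T) = T := fun T _ => Θ.apply_symm_apply T
  let E : Om n m ≃ Om n m :=
    { toFun := PsiS m S (⇑Θ)
      invFun := PsiS m S (⇑Θ.symm)
      left_inv := fun ω => PsiS_PsiS hΘS hinv1 ω
      right_inv := fun ω => PsiS_PsiS hΘS' hinv2 ω }
  rw [← Equiv.sum_comp E (fun ω => if EvtS m S EF' EG' ω then Wt n m p ω else 0)]
  refine Finset.sum_congr rfl fun ω _ => ?_
  show (if EvtS m S EF EG ω then Wt n m p ω else 0) =
    (if EvtS m S EF' EG' (PsiS m S (⇑Θ) ω) then Wt n m p (PsiS m S (⇑Θ) ω) else 0)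
  have h1 := EvtS_PsiS Θ ψF hΘS hG hFim hF1 hF2 ω
  have h2 := Wt_PsiS p hΘS hΘc ω
  by_cases h : EvtS m S EF EG ω
  · rw [if_pos (h1.2 h), h2, if_pos h]
  · rw [if_neg (fun hh => h (h1.1 hh)), if_neg h]

end Stmt11Psi

/-- invariance of `π(F ∪ G, 𝒦(F,G))` (Corollary 5.3). -/
theorem stmt11 (n m : ℕ) (p : ℝ) (hp0 : 0 < p) (hp1 : p < 1)
    (S : Finset (Fin n)) (EF EF' EG EG' : Finset (Finset (Fin n)))
    (hEF : ∀ e ∈ EF, e ⊆ S ∧ e.card = 2)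
    (hEF' : ∀ e ∈ EF', e ⊆ S ∧ e.card = 2)
    (hEG : ∀ e ∈ EG, e ⊆ S ∧ e.card = 2)
    (hEG' : ∀ e ∈ EG', e ⊆ S ∧ e.card = 2)
    (hiso : ∃ φ : Equiv.Perm (Fin n),
      S.image φ = S ∧ EF.image (Finset.image φ) = EF')
    (hcard : EG.card = EG'.card)
    (hd : Disjoint EF EG) (hd' : Disjoint EF' EG') :
    ∑ 𝒞 ∈ Kfam n S EF EG, piCC n m p S (EF ∪ EG) 𝒞 =
      ∑ 𝒞 ∈ Kfam n S EF' EG', piCC n m p S (EF' ∪ EG') 𝒞 := by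
  classical
  obtain ⟨φ, hφS, hφF⟩ := hiso
  rw [sum_piCC_eq p S EF EG hEF hEG, sum_piCC_eq p S EF' EG' hEF' hEG']
  set ψF : Finset (Fin n) → Finset (Fin n) := Finset.image (⇑φ) with hψFdef
  have hψinj : Function.Injective ψF := Finset.image_injective φ.injective
  have hFim : EF.image ψF = EF' := hφF
  have hvS : ∀ v : Fin n, φ v ∈ S ↔ v ∈ S := by
    intro v
    constructor
    · intro h
      rw [← hφS] at h
      obtain ⟨u, hu, hue⟩ := Finset.mem_image.1 h
      rwa [← φ.injective hue]
    · intro h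
      rw [← hφS]; exact Finset.mem_image_of_mem _ h
  have hψS : ∀ T : Finset (Fin n), T ⊆ S → ψF T ⊆ S := by
    intro T hT v hv
    obtain ⟨u, hu, rfl⟩ := Finset.mem_image.1 hv
    exact (hvS u).2 (hT hu)
  have hψS' : ∀ T : Finset (Fin n), T ⊆ S → Finset.image (⇑φ.symm) T ⊆ S := by
    intro T hT v hv
    obtain ⟨u, hu, rfl⟩ := Finset.mem_image.1 hv
    exact (hvS (φ.symm u)).1 (by simpa using hT hu)
  set EGφ : Finset (Finset (Fin n)) := EG.image ψF with hEGφdef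
  have hcardφ : EGφ.card = EG.card := Finset.card_image_of_injective _ hψinj
  have hABd : Disjoint (EGφ \ EG') (EG' \ EGφ) := disjoint_sdiff_sdiff
  have hABc : (EGφ \ EG').card = (EG' \ EGφ).card := by
    have h1 := Finset.card_sdiff_add_card_inter EGφ EG'
    have h2 := Finset.card_sdiff_add_card_inter EG' EGφ
    rw [Finset.inter_comm] at h2
    omega
  set g := Finset.equivOfCardEq hABc with hgdef
  set sf := swapFun (EGφ \ EG') (EG' \ EGφ) g with hsfdef
  have hinv : Function.Involutive sf := swapFun_involutive g hABd
  have hsfO : ∀ x, x ∉ EGφ \ EG' → x ∉ EG' \ EGφ → sf x = x := fun x h1 h2 =>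
    swapFun_other g h1 h2
  have hsfAB : ∀ x, x ∈ EGφ \ EG' ∪ EG' \ EGφ → sf x ∈ EGφ \ EG' ∪ EG' \ EGφ := by
    intro x hx
    rcases Finset.mem_union.1 hx with h | h
    · rw [hsfdef, swapFun_memA g h]
      exact Finset.mem_union_right _ (g ⟨x, h⟩).2
    · rw [hsfdef, swapFun_memB g hABd h]
      exact Finset.mem_union_left _ (g.symm ⟨x, h⟩).2
  have hmemAB : ∀ x ∈ EGφ \ EG' ∪ EG' \ EGφ, x ⊆ S ∧ x.card = 2 := by
    intro x hx
    have hx' : x ∈ EGφ ∨ x ∈ EG' := by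
      rcases Finset.mem_union.1 hx with h | h
      · exact Or.inl (Finset.mem_sdiff.1 h).1
      · exact Or.inr (Finset.mem_sdiff.1 h).1
    rcases hx' with h | h
    · obtain ⟨e, he, rfl⟩ := Finset.mem_image.1 h
      refine ⟨hψS e (hEG e he).1, ?_⟩
      rw [hψFdef, Finset.card_image_of_injective _ φ.injective]
      exact (hEG e he).2
    · exact hEG' x h
  have hEF'AB : ∀ x ∈ EF', x ∉ EGφ \ EG' ∪ EG' \ EGφ := by
    intro x hx hmem
    rcases Finset.mem_union.1 hmem with h | h
    · have hxφ : x ∈ EGφ := (Finset.mem_sdiff.1 h).1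
      obtain ⟨e, he, hex⟩ := Finset.mem_image.1 hxφ
      rw [← hFim] at hx
      obtain ⟨f, hf, hfx⟩ := Finset.mem_image.1 hx
      have hfe : f = e := hψinj (by rw [hfx, hex])
      exact (Finset.disjoint_left.1 hd) hf (hfe ▸ he)
    · exact (Finset.disjoint_left.1 hd') hx (Finset.mem_sdiff.1 h).1
  have hsfEF' : ∀ x ∈ EF', sf x = x := fun x hx =>
    hsfO x (fun h => hEF'AB x hx (Finset.mem_union_left _ h))
      (fun h => hEF'AB x hx (Finset.mem_union_right _ h))
  have hsfS : ∀ x : Finset (Fin n), x ⊆ S → sf x ⊆ S := by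
    intro x hx
    by_cases h1 : x ∈ EGφ \ EG' ∪ EG' \ EGφ
    · exact (hmemAB _ (hsfAB x h1)).1
    · rw [hsfO x (fun h => h1 (Finset.mem_union_left _ h))
        (fun h => h1 (Finset.mem_union_right _ h))]
      exact hx
  have hsfc : ∀ x : Finset (Fin n), x ⊆ S → (sf x).card = x.card := by
    intro x hx
    by_cases h1 : x ∈ EGφ \ EG' ∪ EG' \ EGφ
    · rw [(hmemAB _ (hsfAB x h1)).2, (hmemAB _ h1).2]
    · rw [hsfO x (fun h => h1 (Finset.mem_union_left _ h))
        (fun h => h1 (Finset.mem_union_right _ h))]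
  have himgψ : ∀ T : Finset (Fin n), Finset.image (⇑φ.symm) (ψF T) = T := by
    intro T
    rw [hψFdef]
    simp [Finset.image_image]
  have himgψ' : ∀ T : Finset (Fin n), ψF (Finset.image (⇑φ.symm) T) = T := by
    intro T
    rw [hψFdef]
    simp [Finset.image_image]
  let Θ : Finset (Fin n) ≃ Finset (Fin n) :=
    { toFun := fun T => sf (ψF T)
      invFun := fun T => Finset.image (⇑φ.symm) (sf T)
      left_inv := by
        intro T
        show Finset.image (⇑φ.symm) (sf (sf (ψF T))) = T
        rw [hinv (ψF T)]
        exact himgψ T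
      right_inv := by
        intro T
        show sf (ψF (Finset.image (⇑φ.symm) (sf T))) = T
        rw [himgψ' (sf T)]
        exact hinv T }
  have hΘapp : ∀ T, Θ T = sf (ψF T) := fun T => rfl
  have hΘS : ∀ T, T ⊆ S → Θ T ⊆ S := fun T hT => hsfS _ (hψS T hT)
  have hΘS' : ∀ T, T ⊆ S → Θ.symm T ⊆ S := fun T hT => hψS' _ (hsfS T hT)
  have hΘc : ∀ T, T ⊆ S → (Θ T).card = T.card := by
    intro T hT
    rw [hΘapp, hsfc _ (hψS T hT), hψFdef, Finset.card_image_of_injective _ φ.injective]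
  have hG : EG.image (⇑Θ) = EG' := by
    apply Finset.eq_of_subset_of_card_le
    · intro x hx
      obtain ⟨e, he, rfl⟩ := Finset.mem_image.1 hx
      rw [hΘapp]
      have heφ : ψF e ∈ EGφ := Finset.mem_image_of_mem _ he
      by_cases h1 : ψF e ∈ EGφ \ EG'
      · rw [hsfdef, swapFun_memA g h1]
        exact (Finset.mem_sdiff.1 (g ⟨ψF e, h1⟩).2).1
      · have h2 : ψF e ∉ EG' \ EGφ := fun h => (Finset.mem_sdiff.1 h).2 heφ
        rw [hsfO _ h1 h2]
        by_contra h3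
        exact h1 (Finset.mem_sdiff.2 ⟨heφ, h3⟩)
    · rw [Finset.card_image_of_injective _ Θ.injective]
      exact le_of_eq hcard.symm
  have hF1 : ∀ e ∈ EF, ∀ T, T ⊆ S → (Θ T = ψF e ↔ T = e) := by
    intro e he T hT
    have hfix : sf (ψF e) = ψF e := hsfEF' _ (by rw [← hFim]; exact Finset.mem_image_of_mem _ he)
    rw [hΘapp]
    constructor
    · intro h
      have h2 := congrArg sf h
      rw [hinv (ψF T), hfix] at h2
      exact hψinj h2
    · rintro rfl
      exact hfix
  have hF2 : ∀ e ∈ EF, ∀ T, T ⊆ S → (ψF e ⊆ Θ T ↔ e ⊆ T) := by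
    intro e he T hT
    have heF' : ψF e ∈ EF' := by rw [← hFim]; exact Finset.mem_image_of_mem _ he
    have hec : (ψF e).card = 2 := (hEF' _ heF').2
    rw [hΘapp]
    by_cases h1 : ψF T ∈ EGφ \ EG' ∪ EG' \ EGφ
    · have hsfm : sf (ψF T) ∈ EGφ \ EG' ∪ EG' \ EGφ := hsfAB _ h1
      constructor
      · intro hsub
        exfalso
        have hc2 : (sf (ψF T)).card = 2 := (hmemAB _ hsfm).2
        have heq : ψF e = sf (ψF T) :=
          Finset.eq_of_subset_of_card_le hsub (by rw [hc2, hec])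
        exact hEF'AB _ heF' (heq ▸ hsfm)
      · intro hsub
        exfalso
        have hψsub : ψF e ⊆ ψF T := Finset.image_subset_image hsub
        have hc2 : (ψF T).card = 2 := (hmemAB _ h1).2
        have heq : ψF e = ψF T :=
          Finset.eq_of_subset_of_card_le hψsub (by rw [hc2, hec])
        exact hEF'AB _ heF' (heq ▸ h1)
    · rw [hsfO _ (fun h => h1 (Finset.mem_union_left _ h))
        (fun h => h1 (Finset.mem_union_right _ h))]
      constructor
      · intro h v hv
        have h2 := h (Finset.mem_image_of_mem _ hv)
        obtain ⟨u, hu, hue⟩ := Finset.mem_image.1 h2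
        rwa [← φ.injective hue]
      · exact fun h => Finset.image_subset_image h
  exact sum_wt_evt p Θ ψF hΘS hΘS' hΘc hG hFim hF1 hF2

end

end RIG
end
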